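/- Let either G = (V,E) be a finite connected regular simple graph and A ⊆ V, or G = 𝒯_{d,n} and A ⊆ ℒ. For a,b ∈ V and t ∈ ℕ set e_{a,b}(t) := Σ_{i=0}^t p^i(a,b). Then for every s > 0 and every t ∈ ℕ there exists a subset B_s ⊆ A such that |B_s| ≥ |A|/(1 + s t²) and max_{a,b ∈ B_s, a≠b} Pr_a[T_b < t] ≤ max_{a,b ∈ B_s, a≠b} e_{a,b}(t) < 1/(st). -/

import Mathlib

open Finset Filter
open scoped Classical

namespace FrogFormal

/-! ### Simple random walk on a finite graph -/

variable {V : Type*} [Fintype V]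

/-- The degree of a vertex. -/
noncomputable def deg (G : SimpleGraph V) (x : V) : ℕ :=
  (Finset.univ.filter fun y => G.Adj x y).card

/-- One-step transition probability of simple random walk on `G`. -/
noncomputable def step (G : SimpleGraph V) (x y : V) : ℝ :=
  if G.Adj x y then (1 : ℝ) / (deg G x) else 0

/-- Extend a finite path to an infinite one by freezing it at its final state. -/
def extp {S : Type*} {t : ℕ} (γ : Fin (t + 1) → S) : ℕ → S :=
  fun i => γ ⟨min i t, by omega⟩

/-- The probability, for the Markov chain on the finite state space `S` with transition
kernel `K` started at `x`, of the event `E`, where the trajectory is frozen after time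
`t`.  For every event `E` which is determined by the first `t` steps of the chain, this
is exactly the probability of `E`. -/
noncomputable def chainProb {S : Type*} [Fintype S] (K : S → S → ℝ) (x : S) (t : ℕ)
    (E : Set (ℕ → S)) : ℝ :=
  ∑ ω : Fin (t + 1) → S,
    if ω 0 = x ∧ extp ω ∈ E then ∏ i ∈ Finset.range t, K (extp ω i) (extp ω (i + 1)) else 0

/-- The probability of an event for simple random walk on `G` started at `x`
(trajectory frozen after time `t`). -/
noncomputable def walkProb (G : SimpleGraph V) (x : V) (t : ℕ) (E : Set (ℕ → V)) : ℝ :=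
  chainProb (step G) x t E

/-- The `t`-step transition probability of SRW on `G`. -/
noncomputable def pStep (G : SimpleGraph V) (t : ℕ) (u v : V) : ℝ :=
  walkProb G u t {γ | γ t = v}

/-! ### The frog model -/

/-- Particle counts: the Poisson counts `η`, plus one planted particle at the origin `o`
(the planted particle at `o` is the one of largest index there). -/
noncomputable def cnt (o : V) (η : V → ℕ) (v : V) : ℕ := η v + if v = o then 1 else 0

/-- The Poisson weight `e^{-λ} λ^k / k!`. -/
noncomputable def poisW (lam : ℝ) (k : ℕ) : ℝ :=
  Real.exp (-lam) * lam ^ k / (Nat.factorial k)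

/-- The weight of a length-`T` simple-random-walk path of a particle starting at `v`. -/
noncomputable def pathWt (G : SimpleGraph V) (v : V) {T : ℕ} (γ : Fin (T + 1) → V) : ℝ :=
  if γ 0 = v then ∏ i ∈ Finset.range T, step G (extp γ i) (extp γ (i + 1)) else 0

/-- Embed the (finitely many) truncated particle paths into total path data; the
irrelevant unused particle indices are assigned the path sitting at their vertex. -/
noncomputable def embed (o : V) (η : V → ℕ) {T : ℕ}
    (w : (v : V) → Fin (cnt o η v) → (Fin (T + 1) → V)) : V → ℕ → ℕ → V :=
  fun v i j => if h : i < cnt o η v then extp (w v ⟨i, h⟩) j else v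

/-- The probability, under the frog model on `G` with particle density `lam` and origin
`o`, of the event `E`.  `E` is a predicate of the particle counts (including the planted
particle at `o`) and of the infinite walks picked by the particles; the walks are frozen
after time `T`, so that this is the probability of `E` for every event `E` which is
determined by the first `T` steps of the walks picked by the particles. -/
noncomputable def frogProb (G : SimpleGraph V) (o : V) (lam : ℝ) (T : ℕ)
    (E : (V → ℕ) → (V → ℕ → ℕ → V) → Prop) : ℝ :=
  ∑' η : V → ℕ,
    (∏ v, poisW lam (η v)) *
      ∑ w : (v : V) → Fin (cnt o η v) → (Fin (T + 1) → V),
        (∏ v, ∏ i, pathWt G v (w v i)) * (if E (cnt o η) (embed o η w) then 1 else 0)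

/-- The expectation, under the frog model, of a functional `X` of the particle counts and
of the walks picked by the particles (frozen after time `T`). -/
noncomputable def frogExp (G : SimpleGraph V) (o : V) (lam : ℝ) (T : ℕ)
    (X : (V → ℕ) → (V → ℕ → ℕ → V) → ℝ) : ℝ :=
  ∑' η : V → ℕ,
    (∏ v, poisW lam (η v)) *
      ∑ w : (v : V) → Fin (cnt o η v) → (Fin (T + 1) → V),
        (∏ v, ∏ i, pathWt G v (w v i)) * X (cnt o η) (embed o η w)

/-- Probability for a system of independent particles (with no planted particle), with
`Pois (rate v)` particles at each vertex `v`, walks frozen after time `T`. -/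
noncomputable def indepProb (G : SimpleGraph V) (rate : V → ℝ) (T : ℕ)
    (E : (V → ℕ) → (V → ℕ → ℕ → V) → Prop) : ℝ :=
  ∑' η : V → ℕ,
    (∏ v, poisW (rate v) (η v)) *
      ∑ w : (v : V) → Fin (η v) → (Fin (T + 1) → V),
        (∏ v, ∏ i, pathWt G v (w v i)) *
          (if E η (fun v i j => if h : i < η v then extp (w v ⟨i, h⟩) j else v) then 1 else 0)

/-- `ℓ_τ(x,y)`: the minimal `j ≤ τ` such that some particle initially at `x` visits `y`
at step `j` of the walk it picked (`⊤` if there is none).  Here `c v` is the number of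
particles initially at `v` and `w v i` is the walk picked by the `i`-th particle at `v`. -/
noncomputable def ell {V : Type*} (c : V → ℕ) (w : V → ℕ → ℕ → V) (τ : ℕ∞) (x y : V) : ℕ∞ :=
  sInf {j : ℕ∞ | ∃ jn : ℕ, j = (jn : ℕ∞) ∧ (jn : ℕ∞) ≤ τ ∧ ∃ i < c x, w x i jn = y}

/-- The activation time `AT_τ(x)` of the site `x` in the frog model with lifetime `τ`
and origin `o`. -/
noncomputable def AT {V : Type*} (o : V) (c : V → ℕ) (w : V → ℕ → ℕ → V) (τ : ℕ∞) (x : V) : ℕ∞ :=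
  ⨅ (m : ℕ) (seq : ℕ → V) (_ : seq 0 = o) (_ : seq m = x),
    ∑ i ∈ Finset.range m, ell c w τ (seq i) (seq (i + 1))

/-- The susceptibility `𝒮`: the least lifetime `τ ∈ ℕ` for which every site gets
activated before the process dies out. -/
noncomputable def susc {V : Type*} (o : V) (c : V → ℕ) (w : V → ℕ → ℕ → V) : ℕ∞ :=
  sInf {τ : ℕ∞ | ∃ tn : ℕ, τ = (tn : ℕ∞) ∧ ∀ x, AT o c w (tn : ℕ∞) x ≠ ⊤}

/-- The cover time `CT = max_x AT_∞(x)`. -/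
noncomputable def coverTime {V : Type*} (o : V) (c : V → ℕ) (w : V → ℕ → ℕ → V) : ℕ∞ :=
  ⨆ x, AT o c w ⊤ x

/-! ### The `d`-ary tree of depth `n` -/

/-- Vertices of the `d`-ary tree of depth `n`: a depth `k ≤ n` together with a word of
`k` child-indices describing the path from the root. -/
abbrev TV (d n : ℕ) := (k : Fin (n + 1)) × (Fin (k : ℕ) → Fin d)

/-- `x` is the parent of `y`. -/
def parentOf {d n : ℕ} (x y : TV d n) : Prop :=
  ∃ _h : (y.1 : ℕ) = (x.1 : ℕ) + 1, ∀ i : ℕ, ∀ hi : i < (x.1 : ℕ),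
    y.2 ⟨i, by omega⟩ = x.2 ⟨i, hi⟩

/-- The `d`-ary tree of depth `n`, as a simple graph. -/
def treeGraph (d n : ℕ) : SimpleGraph (TV d n) where
  Adj x y := parentOf x y ∨ parentOf y x
  symm := ⟨fun x y h => Or.symm h⟩
  loopless := ⟨fun x h => by rcases h with ⟨h1, _⟩ | ⟨h1, _⟩ <;> omega⟩

/-- The root `𝐫`. -/
def root (d n : ℕ) : TV d n := ⟨⟨0, Nat.succ_pos n⟩, fun i => i.elim0⟩

/-- `x` is a leaf, i.e. has depth `n`. -/
def isLeaf {d n : ℕ} (x : TV d n) : Prop := (x.1 : ℕ) = n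

/-- `‖x‖`, the distance from `x` to the leaf set. -/
def normV {d n : ℕ} (x : TV d n) : ℕ := n - (x.1 : ℕ)

/-- `x` is an ancestor of (or equal to) `y`; equivalently, `y` belongs to the induced
subtree `𝒯_x` consisting of `x` and its descendants. -/
def isAnc {d n : ℕ} (x y : TV d n) : Prop :=
  ∃ h : (x.1 : ℕ) ≤ (y.1 : ℕ), ∀ i : ℕ, ∀ hi : i < (x.1 : ℕ),
    y.2 ⟨i, lt_of_lt_of_le hi h⟩ = x.2 ⟨i, hi⟩

/-- `x` and `y` agree in their first `m` coordinates. -/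
def agreeUpTo {d n : ℕ} (x y : TV d n) (m : ℕ) : Prop :=
  ∃ (hx : m ≤ (x.1 : ℕ)) (hy : m ≤ (y.1 : ℕ)),
    ∀ i : ℕ, ∀ hi : i < m, x.2 ⟨i, lt_of_lt_of_le hi hx⟩ = y.2 ⟨i, lt_of_lt_of_le hi hy⟩

/-- The depth of `x ∧ y`, the common ancestor of `x` and `y` farthest from the root. -/
noncomputable def meetDepth {d n : ℕ} (x y : TV d n) : ℕ :=
  Nat.findGreatest (agreeUpTo x y) n

/-- `‖x ∧ y‖`, the distance from the common ancestor of `x,y` to the leaf set. -/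
noncomputable def meetNorm {d n : ℕ} (x y : TV d n) : ℕ := n - meetDepth x y

/-- The ancestor of `y` at depth `ℓ` (or `y` itself, if `ℓ` exceeds the depth of `y`). -/
def truncAnc {d n : ℕ} (y : TV d n) (ℓ : ℕ) : TV d n :=
  ⟨⟨min ℓ (y.1 : ℕ), lt_of_le_of_lt (min_le_right _ _) y.1.isLt⟩,
   fun i => y.2 ⟨(i : ℕ), lt_of_lt_of_le i.isLt (min_le_right ℓ (y.1 : ℕ))⟩⟩

/-- The number of vertices of an induced subtree rooted at a vertex of depth `ℓ`. -/
def subtreeCard (d n : ℕ) (ℓ : ℕ) : ℕ := ∑ j ∈ Finset.range (n - ℓ + 1), d ^ j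

/-- The root of `𝒯_y(m)`, the smallest induced subtree `𝒯_z` with `z` an ancestor of
(or equal to) `y` and `|𝒯_z| ≥ m`. -/
noncomputable def inducedRoot {d n : ℕ} (y : TV d n) (m : ℕ) : TV d n :=
  truncAnc y (Nat.findGreatest (fun ℓ => ℓ ≤ (y.1 : ℕ) ∧ m ≤ subtreeCard d n ℓ) n)

/-- `g(t) = t / log_d (d t)`. -/
noncomputable def gfun (d t : ℕ) : ℝ := (t : ℝ) / Real.logb d (d * t)

/-- `e_{a,b}(t) = Σ_{i=0}^t p^i(a,b)`. -/
noncomputable def esum {V : Type*} [Fintype V] (G : SimpleGraph V) (a b : V) (t : ℕ) : ℝ :=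
  ∑ i ∈ Finset.range (t + 1), pStep G i a b

/-- `max_{a,b ∈ B, a ≠ b} Pr_a [T_b < t]`. -/
noncomputable def maxHit {V : Type*} [Fintype V] (G : SimpleGraph V) (B : Finset V)
    (t : ℕ) : ℝ :=
  sSup {r : ℝ | ∃ a ∈ B, ∃ b ∈ B, a ≠ b ∧ r = walkProb G a t {γ | ∃ j < t, γ j = b}}

/-- `max_{a,b ∈ B, a ≠ b} e_{a,b}(t)`. -/
noncomputable def maxE {V : Type*} [Fintype V] (G : SimpleGraph V) (B : Finset V)
    (t : ℕ) : ℝ :=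
  sSup {r : ℝ | ∃ a ∈ B, ∃ b ∈ B, a ≠ b ∧ r = esum G a b t}

/-!
Join distinct `a, b ∈ A` by an edge when `e_{a,b}(t) ≥ 1/(st)`. Time `0` contributes nothing to
`∑_{b ≠ a} e_{a,b}(t)` and every later time at most `1`, so this sum is at most `t` and every `a`
has at most `st²` neighbours; a greedy independent set `B` then has `|B| ≥ |A|/(1 + st²)`, and
`e_{a,b}(t) < 1/(st)` on it. The relation is symmetric because reversibility,
`deg a · p^i(a,b) = deg b · p^i(b,a)`, makes `e` symmetric on vertices of equal degree: all
vertices of a regular graph, all leaves of the tree. Finally `Pr_a[T_b < t] ≤ ∑_{j<t} p^j(a,b)`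
by a union bound.
-/

section MarkovChain

variable {S : Type*}

lemma extp_of_le {t : ℕ} (γ : Fin (t + 1) → S) {i : ℕ} (hi : i ≤ t) :
    extp γ i = γ ⟨i, by omega⟩ := by
  simp [extp, hi]

lemma extp_snoc_of_le {t : ℕ} (ρ : Fin (t + 1) → S) (v : S) {i : ℕ} (hi : i ≤ t) :
    extp (Fin.snoc ρ v : Fin (t + 2) → S) i = extp ρ i := by
  rw [extp_of_le _ (by omega : i ≤ t + 1), extp_of_le ρ hi]
  exact Fin.snoc_castSucc (α := fun _ => S) (p := ρ) (x := v) (i := ⟨i, by omega⟩)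

lemma extp_snoc_succ {t : ℕ} (ρ : Fin (t + 1) → S) (v : S) :
    extp (Fin.snoc ρ v : Fin (t + 2) → S) (t + 1) = v := by
  rw [extp_of_le _ le_rfl]
  exact Fin.snoc_last (α := fun _ => S) v ρ

def IsDeterminedUpTo (E : Set (ℕ → S)) (j : ℕ) : Prop :=
  ∀ γ γ' : ℕ → S, (∀ i ≤ j, γ i = γ' i) → (γ ∈ E ↔ γ' ∈ E)

lemma IsDeterminedUpTo.mono {E : Set (ℕ → S)} {j t : ℕ} (hE : IsDeterminedUpTo E j)
    (hjt : j ≤ t) : IsDeterminedUpTo E t :=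
  fun γ γ' h => hE γ γ' fun i hi => h i (hi.trans hjt)

variable [Fintype S] {K : S → S → ℝ}

lemma chainProb_nonneg (hK : ∀ x y, 0 ≤ K x y) (x : S) (t : ℕ)
    (E : Set (ℕ → S)) : 0 ≤ chainProb K x t E :=
  sum_nonneg fun _ _ => ite_nonneg (prod_nonneg fun _ _ => hK _ _) le_rfl

lemma chainProb_zero (x : S) (E : Set (ℕ → S)) :
    chainProb K x 0 E = if (fun _ => x) ∈ E then 1 else 0 := by
  have hextp : ∀ ω : Fin 1 → S, extp ω = fun _ => ω 0 :=
    fun ω => funext fun i => congrArg ω (Fin.ext (by simp))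
  rw [chainProb, ← (Equiv.funUnique (Fin 1) S).symm.sum_comp]
  simp only [hextp, range_zero, prod_empty]
  rw [Fintype.sum_eq_single x fun y hy => by simp [hy]]
  simp [Equiv.funUnique]

lemma chainProb_succ (x : S) (t : ℕ) (E : Set (ℕ → S)) :
    chainProb K x (t + 1) E = ∑ ρ : Fin (t + 1) → S, ∑ v,
      if ρ 0 = x ∧ extp (Fin.snoc ρ v : Fin (t + 2) → S) ∈ E then
        (∏ i ∈ range t, K (extp ρ i) (extp ρ (i + 1))) * K (extp ρ t) v else 0 := by
  rw [chainProb, ← (Fin.snocEquiv fun _ => S).sum_comp, Fintype.sum_prod_type, sum_comm]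
  refine sum_congr rfl fun ρ _ => sum_congr rfl fun v _ => ?_
  have h0 : (Fin.snoc ρ v : Fin (t + 2) → S) 0 = ρ 0 := by simp
  rw [show (Fin.snocEquiv fun _ => S) (v, ρ) = Fin.snoc ρ v from rfl, h0, prod_range_succ,
    extp_snoc_of_le ρ v le_rfl, extp_snoc_succ]
  congr 2
  refine prod_congr rfl fun i hi => ?_
  rw [mem_range] at hi
  rw [extp_snoc_of_le ρ v (by omega), extp_snoc_of_le ρ v (by omega)]

lemma chainProb_succ_le (hK : ∀ x y, 0 ≤ K x y)
    (hrow : ∀ x, ∑ y, K x y ≤ 1) (x : S) (t : ℕ) {E : Set (ℕ → S)}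
    (hE : IsDeterminedUpTo E t) : chainProb K x (t + 1) E ≤ chainProb K x t E := by
  rw [chainProb_succ, chainProb]
  refine sum_le_sum fun ρ _ => ?_
  have hmem : ∀ v, extp (Fin.snoc ρ v : Fin (t + 2) → S) ∈ E ↔ extp ρ ∈ E :=
    fun v => hE _ _ fun i hi => extp_snoc_of_le ρ v hi
  simp only [hmem]
  split_ifs
  · rw [← mul_sum]
    exact mul_le_of_le_one_right (prod_nonneg fun _ _ => hK _ _) (hrow _)
  · simp

lemma chainProb_le_of_le (hK : ∀ x y, 0 ≤ K x y)
    (hrow : ∀ x, ∑ y, K x y ≤ 1) (x : S) {j t : ℕ} (hjt : j ≤ t) {E : Set (ℕ → S)}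
    (hE : IsDeterminedUpTo E j) : chainProb K x t E ≤ chainProb K x j E := by
  induction t, hjt using Nat.le_induction with
  | base => exact le_rfl
  | succ t hjt ih => exact (chainProb_succ_le hK hrow x t (hE.mono hjt)).trans ih

lemma chainProb_biUnion_le (hK : ∀ x y, 0 ≤ K x y) (x : S)
    (t : ℕ) {ι : Type*} (s : Finset ι) (E : ι → Set (ℕ → S)) :
    chainProb K x t (⋃ j ∈ s, E j) ≤ ∑ j ∈ s, chainProb K x t (E j) := by
  simp only [chainProb]
  rw [sum_comm]
  refine sum_le_sum fun ω _ => ?_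
  set w := ∏ i ∈ range t, K (extp ω i) (extp ω (i + 1))
  have hw : 0 ≤ w := prod_nonneg fun _ _ => hK _ _
  have hterm : ∀ j, 0 ≤ if ω 0 = x ∧ extp ω ∈ E j then w else 0 :=
    fun j => ite_nonneg hw le_rfl
  split_ifs with h
  · obtain ⟨h0, hmem⟩ := h
    obtain ⟨j, hj, hjE⟩ := Set.mem_iUnion₂.1 hmem
    calc w = if ω 0 = x ∧ extp ω ∈ E j then w else 0 := (if_pos ⟨h0, hjE⟩).symm
      _ ≤ _ := single_le_sum (fun j _ => hterm j) hj
  · exact sum_nonneg fun j _ => hterm j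

end MarkovChain

open scoped Matrix in
lemma isSymm_mul_pow_of_isSymm_mul {n R : Type*} [Fintype n] [DecidableEq n]
    [CommSemiring R] {D M : Matrix n n R} (hD : D.IsSymm) (hDM : (D * M).IsSymm) (i : ℕ) :
    (D * M ^ i).IsSymm := by
  induction i with
  | zero => simpa using hD
  | succ i ih =>
    show (D * M ^ (i + 1))ᵀ = D * M ^ (i + 1)
    calc (D * M ^ (i + 1))ᵀ = Mᵀ * (D * M ^ i)ᵀ := by
          rw [pow_succ, ← Matrix.mul_assoc, Matrix.transpose_mul]
      _ = (D * M)ᵀ * M ^ i := by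
          rw [ih.eq, Matrix.transpose_mul, hD.eq, Matrix.mul_assoc]
      _ = D * M ^ (i + 1) := by rw [hDM.eq, pow_succ', Matrix.mul_assoc]

section RandomWalk

lemma deg_pos_of_adj {G : SimpleGraph V} {x y : V} (h : G.Adj x y) : 0 < deg G x :=
  card_pos.2 ⟨y, by simp [h]⟩

variable (G : SimpleGraph V)

lemma step_nonneg (x y : V) : 0 ≤ step G x y := by
  unfold step; split <;> positivity

lemma sum_step_le_one (x : V) : ∑ y, step G x y ≤ 1 := by
  calc ∑ y, step G x y = deg G x * (1 / deg G x) := by simp [step, sum_ite, deg]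
    _ ≤ 1 := by rcases eq_or_ne (deg G x : ℝ) 0 with h | h <;> simp [h]

lemma step_eq_zero_of_deg_eq_zero {y : V} (hy : deg G y = 0) (x : V) : step G x y = 0 :=
  if_neg fun h => (deg_pos_of_adj h.symm).ne' hy

lemma deg_mul_step_comm (x y : V) :
    (deg G x : ℝ) * step G x y = (deg G y : ℝ) * step G y x := by
  unfold step
  by_cases h : G.Adj x y
  · rw [if_pos h, if_pos h.symm, mul_one_div_cancel, mul_one_div_cancel]
    · exact_mod_cast (deg_pos_of_adj h.symm).ne'
    · exact_mod_cast (deg_pos_of_adj h).ne'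
  · rw [if_neg h, if_neg fun h' => h h'.symm, mul_zero, mul_zero]

noncomputable def transMatrix : Matrix V V ℝ := Matrix.of (step G)

lemma pStep_nonneg (t : ℕ) (u v : V) : 0 ≤ pStep G t u v :=
  chainProb_nonneg (step_nonneg G) _ _ _

lemma pStep_zero (u v : V) : pStep G 0 u v = if u = v then 1 else 0 := by
  simp [pStep, walkProb, chainProb_zero]

lemma pStep_succ (t : ℕ) (u v : V) :
    pStep G (t + 1) u v = ∑ c, pStep G t u c * step G c v := by
  simp only [pStep, walkProb]
  rw [chainProb_succ]
  simp only [chainProb, sum_mul]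
  conv_rhs => rw [sum_comm]
  refine sum_congr rfl fun ρ _ => ?_
  simp [extp_snoc_succ, ite_mul, ite_and]

lemma pStep_eq_transMatrix_pow (t : ℕ) (u v : V) : pStep G t u v = (transMatrix G ^ t) u v := by
  induction t generalizing v with
  | zero => rw [pStep_zero, pow_zero, Matrix.one_apply]
  | succ t ih => simp [pStep_succ, pow_succ, Matrix.mul_apply, ih, transMatrix]

lemma sum_pStep_le_one (t : ℕ) (u : V) : ∑ v, pStep G t u v ≤ 1 := by
  induction t with
  | zero => simp [pStep_zero]
  | succ t ih =>
    calc ∑ v, pStep G (t + 1) u v = ∑ c, pStep G t u c * ∑ v, step G c v := by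
          simp only [pStep_succ, mul_sum]
          exact sum_comm
      _ ≤ ∑ c, pStep G t u c :=
          sum_le_sum fun c _ => mul_le_of_le_one_right (pStep_nonneg G t u c) (sum_step_le_one G c)
      _ ≤ 1 := ih

lemma deg_mul_pStep_comm (t : ℕ) (a b : V) :
    (deg G a : ℝ) * pStep G t a b = (deg G b : ℝ) * pStep G t b a := by
  have hsymm := isSymm_mul_pow_of_isSymm_mul (M := transMatrix G)
    (Matrix.isSymm_diagonal fun x => (deg G x : ℝ))
    (Matrix.IsSymm.ext fun x y => by simp [transMatrix, deg_mul_step_comm G y x]) t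
  simpa [pStep_eq_transMatrix_pow] using hsymm.apply b a

lemma pStep_succ_eq_zero_of_deg_eq_zero {b : V} (hb : deg G b = 0) (t : ℕ) (a : V) :
    pStep G (t + 1) a b = 0 := by
  simp [pStep_succ, step_eq_zero_of_deg_eq_zero G hb]

lemma pStep_comm_of_deg_eq {a b : V} (hab : deg G a = deg G b) (t : ℕ) :
    pStep G t a b = pStep G t b a := by
  rcases Nat.eq_zero_or_pos (deg G a) with ha | ha
  · cases t with
    | zero => simp [pStep_zero, eq_comm]
    | succ t =>
      rw [pStep_succ_eq_zero_of_deg_eq_zero G (hab ▸ ha),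
        pStep_succ_eq_zero_of_deg_eq_zero G ha]
  · have hb : (deg G b : ℝ) ≠ 0 := by exact_mod_cast (hab ▸ ha).ne'
    exact mul_left_cancel₀ hb (hab ▸ deg_mul_pStep_comm G t a b)

lemma esum_nonneg (a b : V) (t : ℕ) : 0 ≤ esum G a b t :=
  sum_nonneg fun i _ => pStep_nonneg G i a b

lemma esum_comm_of_deg_eq {a b : V} (hab : deg G a = deg G b) (t : ℕ) :
    esum G a b t = esum G b a t :=
  sum_congr rfl fun i _ => pStep_comm_of_deg_eq G hab i

lemma walkProb_hit_le_esum (a b : V) (t : ℕ) :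
    walkProb G a t {γ | ∃ j < t, γ j = b} ≤ esum G a b t := by
  have hhit : {γ : ℕ → V | ∃ j < t, γ j = b} = ⋃ j ∈ range t, {γ | γ j = b} := by
    ext γ; simp
  calc walkProb G a t {γ | ∃ j < t, γ j = b}
      ≤ ∑ j ∈ range t, walkProb G a t {γ | γ j = b} := by
        rw [hhit]; exact chainProb_biUnion_le (step_nonneg G) a t _ _
    _ ≤ ∑ j ∈ range t, pStep G j a b := by
        refine sum_le_sum fun j hj => chainProb_le_of_le (step_nonneg G) (sum_step_le_one G) a
          (mem_range.1 hj).le fun γ γ' h => ?_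
        simp [h j le_rfl]
    _ ≤ esum G a b t :=
        sum_le_sum_of_subset_of_nonneg (range_subset_range.2 t.le_succ)
          fun i _ _ => pStep_nonneg G i a b

lemma sum_esum_erase_le (a : V) (t : ℕ) : ∑ b ∈ univ.erase a, esum G a b t ≤ t := by
  have hstart : ∑ b ∈ univ.erase a, pStep G 0 a b = 0 :=
    sum_eq_zero fun b hb => by simp [pStep_zero, (ne_of_mem_erase hb).symm]
  have hlater : ∀ i, ∑ b ∈ univ.erase a, pStep G (i + 1) a b ≤ 1 := fun i =>
    (sum_le_sum_of_subset_of_nonneg (subset_univ _) fun b _ _ => pStep_nonneg G _ a b).trans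
      (sum_pStep_le_one G _ a)
  calc ∑ b ∈ univ.erase a, esum G a b t
      = ∑ i ∈ range t, ∑ b ∈ univ.erase a, pStep G (i + 1) a b := by
        simp only [esum]
        rw [sum_comm, sum_range_succ', hstart, add_zero]
    _ ≤ ∑ _i ∈ range t, (1 : ℝ) := sum_le_sum fun i _ => hlater i
    _ = t := by simp

end RandomWalk

/-- Greedy selection: keep a vertex, discard its at most `D` neighbours, and recurse. -/
lemma exists_isIndepSet_card_le_mul {α : Type*} (H : SimpleGraph α) [DecidableRel H.Adj] (D : ℕ)
    (A : Finset α) (hdeg : ∀ a ∈ A, #{b ∈ A | H.Adj a b} ≤ D) :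
    ∃ B ⊆ A, H.IsIndepSet (B : Set α) ∧ #A ≤ (D + 1) * #B := by
  induction A using Finset.strongInduction with
  | _ A ih =>
  rcases A.eq_empty_or_nonempty with rfl | ⟨a, ha⟩
  · exact ⟨∅, empty_subset _, by simp, by simp⟩
  set A' := {b ∈ A.erase a | ¬H.Adj a b}
  have hA'A : A' ⊆ A := (filter_subset _ _).trans (erase_subset _ _)
  have haA' : a ∉ A' := fun h => by simp [A'] at h
  obtain ⟨B', hB'A', hB'indep, hB'card⟩ :=
    ih A' ((ssubset_iff_of_subset hA'A).2 ⟨a, ha, haA'⟩) fun b hb =>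
      (card_le_card (filter_subset_filter _ hA'A)).trans (hdeg b (hA'A hb))
  refine ⟨insert a B', insert_subset ha (hB'A'.trans hA'A), ?_, ?_⟩
  · rw [coe_insert]
    refine hB'indep.insert fun b hb _ => ?_
    have hab : ¬H.Adj a b := (mem_filter.1 (hB'A' hb)).2
    exact ⟨hab, fun h => hab h.symm⟩
  · have hcover : A ⊆ A' ∪ insert a {b ∈ A | H.Adj a b} := fun b hb => by
      by_cases hba : b = a <;> by_cases hadj : H.Adj a b <;> simp [A', *]
    calc #A ≤ #A' + #(insert a {b ∈ A | H.Adj a b}) :=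
          (card_le_card hcover).trans (card_union_le _ _)
      _ ≤ #A' + (D + 1) := by grw [card_insert_le, hdeg a ha]
      _ ≤ (D + 1) * #B' + (D + 1) := by gcongr
      _ = (D + 1) * #(insert a B') := by
          rw [card_insert_of_notMem fun h => haA' (hB'A' h)]; ring

/-- `maxHit` and `maxE` are suprema of such sets. -/
def offDiagValues {α : Type*} (B : Finset α) (f : α → α → ℝ) : Set ℝ :=
  {r | ∃ a ∈ B, ∃ b ∈ B, a ≠ b ∧ r = f a b}

section OffDiagValues

variable {α : Type*} (B : Finset α)

lemma offDiagValues_finite (f : α → α → ℝ) : (offDiagValues B f).Finite :=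
  ((B ×ˢ B).finite_toSet.image fun p => f p.1 p.2).subset
    fun _ ⟨a, ha, b, hb, _, hr⟩ => ⟨(a, b), by simp [ha, hb], hr.symm⟩

lemma sSup_offDiagValues_mono {f g : α → α → ℝ}
    (hfg : ∀ a ∈ B, ∀ b ∈ B, a ≠ b → f a b ≤ g a b) (hg : ∀ a b, 0 ≤ g a b) :
    sSup (offDiagValues B f) ≤ sSup (offDiagValues B g) := by
  refine Real.sSup_le (fun r ⟨a, ha, b, hb, hab, hr⟩ => hr ▸ (hfg a ha b hb hab).trans ?_)
    (Real.sSup_nonneg fun r ⟨a, _, b, _, _, hr⟩ => hr ▸ hg a b)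
  exact le_csSup (offDiagValues_finite B g).bddAbove ⟨a, ha, b, hb, hab, rfl⟩

lemma sSup_offDiagValues_lt {f : α → α → ℝ} {c : ℝ} (hc : 0 < c)
    (hf : ∀ a ∈ B, ∀ b ∈ B, a ≠ b → f a b < c) : sSup (offDiagValues B f) < c := by
  rcases (offDiagValues B f).eq_empty_or_nonempty with hempty | hne
  · rwa [hempty, Real.sSup_empty]
  · exact ((offDiagValues_finite B f).csSup_lt_iff hne).2
      fun r ⟨a, ha, b, hb, hab, hr⟩ => hr ▸ hf a ha b hb hab

end OffDiagValues

lemma card_esum_ge_mul_le (G : SimpleGraph V) (a : V) (t : ℕ) (c : ℝ) :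
    #{b ∈ univ.erase a | c ≤ esum G a b t} * c ≤ t := by
  calc #{b ∈ univ.erase a | c ≤ esum G a b t} * c
      ≤ ∑ b ∈ univ.erase a with c ≤ esum G a b t, esum G a b t := by
        simpa using card_nsmul_le_sum _ _ c fun b hb => (mem_filter.1 hb).2
    _ ≤ ∑ b ∈ univ.erase a, esum G a b t :=
        sum_le_sum_of_subset_of_nonneg (filter_subset _ _) fun b _ _ => esum_nonneg G a b t
    _ ≤ t := sum_esum_erase_le G a t

theorem exists_large_subset_maxE_lt_of_deg_eq (G : SimpleGraph V) (A : Finset V)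
    (hdeg : ∀ a ∈ A, ∀ b ∈ A, deg G a = deg G b) (s : ℝ) (hs : 0 < s) (t : ℕ)
    (ht : 0 < t) :
    ∃ B : Finset V, B ⊆ A ∧ (A.card : ℝ) / (1 + s * (t : ℝ) ^ 2) ≤ (B.card : ℝ) ∧
      maxHit G B t ≤ maxE G B t ∧ maxE G B t < 1 / (s * t) := by
  let H := SimpleGraph.fromRel fun a b => 1 / (s * t) ≤ esum G a b t
  have hconflicts : ∀ a ∈ A, #{b ∈ A | H.Adj a b} ≤ ⌊s * t ^ 2⌋₊ := by
    intro a ha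
    have hsub : {b ∈ A | H.Adj a b} ⊆ {b ∈ univ.erase a | 1 / (s * t) ≤ esum G a b t} := by
      intro b hb
      obtain ⟨hbA, hab, hconf⟩ := by simpa [H] using hb
      rw [esum_comm_of_deg_eq G (hdeg b hbA a ha), or_self] at hconf
      simp [Ne.symm hab, hconf]
    refine Nat.le_floor ?_
    calc (#{b ∈ A | H.Adj a b} : ℝ)
        ≤ #{b ∈ univ.erase a | 1 / (s * t) ≤ esum G a b t} := by exact_mod_cast card_le_card hsub
      _ ≤ t / (1 / (s * t)) := by
          rw [le_div_iff₀ (by positivity)]; exact card_esum_ge_mul_le G a t _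
      _ = s * t ^ 2 := by field_simp
  obtain ⟨B, hBA, hBindep, hBcard⟩ := exists_isIndepSet_card_le_mul H _ A hconflicts
  refine ⟨B, hBA, ?_, ?_, ?_⟩
  · rw [div_le_iff₀ (by positivity)]
    calc (#A : ℝ) ≤ (⌊s * t ^ 2⌋₊ + 1) * #B := by exact_mod_cast hBcard
      _ ≤ #B * (1 + s * t ^ 2) := by nlinarith [Nat.floor_le (by positivity : 0 ≤ s * t ^ 2)]
  · exact sSup_offDiagValues_mono B (fun a _ b _ _ => walkProb_hit_le_esum G a b t)
      fun a b => esum_nonneg G a b t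
  · refine sSup_offDiagValues_lt B (by positivity) fun a ha b hb hab => lt_of_not_ge fun h => ?_
    exact hBindep ha hb hab ((SimpleGraph.fromRel_adj _ a b).2 ⟨hab, Or.inl h⟩)

lemma deg_treeGraph_of_isLeaf {d n : ℕ} (hn : 0 < n) {a : TV d n} (ha : isLeaf a) :
    deg (treeGraph d n) a = 1 := by
  unfold isLeaf at ha
  rw [deg, card_eq_one]
  refine ⟨⟨⟨n - 1, by omega⟩, fun i => a.2 ⟨i, by omega⟩⟩, ext fun y => ?_⟩
  simp only [mem_filter, mem_univ, true_and, mem_singleton]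
  constructor
  · rintro (⟨hy, -⟩ | ⟨hy, hya⟩)
    · omega
    · obtain ⟨⟨m, hm⟩, g⟩ := y
      obtain rfl : m = n - 1 := by simp only at hy; omega
      exact Sigma.ext rfl (heq_of_eq (funext fun i => (hya i i.isLt).symm))
  · rintro rfl
    exact Or.inr ⟨by simp only; omega, fun i hi => rfl⟩

lemma deg_eq_of_isLeaf {d n : ℕ} {a b : TV d n} (ha : isLeaf a) (hb : isLeaf b) :
    deg (treeGraph d n) a = deg (treeGraph d n) b := by
  rcases Nat.eq_zero_or_pos n with rfl | hn
  · obtain ⟨⟨k, hk⟩, f⟩ := a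
    obtain ⟨⟨l, hl⟩, g⟩ := b
    obtain rfl : k = 0 := by omega
    obtain rfl : l = 0 := by omega
    rw [Subsingleton.elim f g]
  · rw [deg_treeGraph_of_isLeaf hn ha, deg_treeGraph_of_isLeaf hn hb]

/-- Let either `G = (V,E)` be a finite connected regular simple graph
and `A ⊆ V`, or `G = 𝒯_{d,n}` and `A ⊆ ℒ`.  Then for every `s > 0` and every `t ∈ ℕ`
(with `ℕ = {1,2,…}` as in the paper) there exists `B_s ⊆ A` with
`|B_s| ≥ |A| / (1 + s t²)` and
`max_{a,b ∈ B_s, a≠b} Pr_a[T_b < t] ≤ max_{a,b ∈ B_s, a≠b} e_{a,b}(t) < 1/(s t)`. -/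
theorem statement8 :
    (∀ (V : Type*) [Fintype V],
      ∀ G : SimpleGraph V, G.Connected → (∃ r : ℕ, ∀ v, deg G v = r) →
        ∀ A : Finset V, ∀ s : ℝ, 0 < s → ∀ t : ℕ, 0 < t →
          ∃ B : Finset V, B ⊆ A ∧
            (A.card : ℝ) / (1 + s * (t : ℝ) ^ 2) ≤ (B.card : ℝ) ∧
            maxHit G B t ≤ maxE G B t ∧ maxE G B t < 1 / (s * t)) ∧
    (∀ d n : ℕ, 2 ≤ d →
      ∀ A : Finset (TV d n), (∀ a ∈ A, isLeaf a) → ∀ s : ℝ, 0 < s → ∀ t : ℕ, 0 < t →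
        ∃ B : Finset (TV d n), B ⊆ A ∧
          (A.card : ℝ) / (1 + s * (t : ℝ) ^ 2) ≤ (B.card : ℝ) ∧
          maxHit (treeGraph d n) B t ≤ maxE (treeGraph d n) B t ∧
          maxE (treeGraph d n) B t < 1 / (s * t)) := by
  constructor
  · rintro V _ G - ⟨r, hr⟩ A s hs t ht
    exact exists_large_subset_maxE_lt_of_deg_eq G A (fun a _ b _ => (hr a).trans (hr b).symm)
      s hs t ht
  · intro d n _ A hA s hs t ht
    exact exists_large_subset_maxE_lt_of_deg_eq (treeGraph d n) A
      (fun a ha b hb => deg_eq_of_isLeaf (hA a ha) (hA b hb)) s hs t ht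

end FrogFormal
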